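/- Let R be a principal ideal domain and let C be a projective chain complex over RΓ. Suppose H, K, L ∈ F with H ≤ K and H ≤ L, and let M = ⟨K, L⟩ be the subgroup of G generated by K and L. If the degreewise intersection C^K_H ∩ C^L_H inside C(H) is nonzero, then M ∈ F and C^K_H ∩ C^L_H = C^M_H. -/

import Mathlib

open CategoryTheory CategoryTheory.Limits Opposite

noncomputable section

namespace OrbitPaper

variable (G : Type) [Group G] (F : Set (Subgroup G)) (R : Type) [CommRing R]

/-- The conjugate subgroup `gHg⁻¹` of `H`. -/
def conjSub (g : G) (H : Subgroup G) : Subgroup G := H.map (MulAut.conj g).toMonoidHom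

/-- `(H) ≤ (K)` : some conjugate of `H` is contained in `K`. -/
def Subconj (H K : Subgroup G) : Prop := ∃ g : G, conjSub G g H ≤ K

/-- `(H) < (K)` : `(H) ≤ (K)` but not `(K) ≤ (H)`. -/
def SubconjLT (H K : Subgroup G) : Prop := Subconj G H K ∧ ¬ Subconj G K H

/-- `F` is a family of subgroups closed under conjugation and under taking subgroups. -/
def IsClosedFamily : Prop :=
  (∀ (g : G) (H : Subgroup G), H ∈ F → conjSub G g H ∈ F) ∧
    (∀ H K : Subgroup G, H ≤ K → K ∈ F → H ∈ F)

/-- A super class function defined on `F`: it is constant on conjugacy classes and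
takes the value `-1` outside of `F`. -/
def IsSuperClass (n : Subgroup G → ℤ) : Prop :=
  (∀ (g : G) (H : Subgroup G), n (conjSub G g H) = n H) ∧ (∀ H : Subgroup G, H ∉ F → n H = -1)

/-- Objects of the orbit category `Or_F G` : orbits `G/K` with `K ∈ F`. -/
structure OrbitObj : Type where
  grp : Subgroup G
  mem : grp ∈ F

variable {G F}

/-- The orbit category: morphisms `G/K → G/L` are the `G`-equivariant maps. -/
instance : Category (OrbitObj G F) where
  Hom A B := { f : G ⧸ A.grp → G ⧸ B.grp // ∀ (g : G) (x : G ⧸ A.grp), f (g • x) = g • f x }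
  id A := ⟨fun x => x, fun _ _ => rfl⟩
  comp f g := ⟨fun x => g.1 (f.1 x), fun a x => by
    show g.1 (f.1 (a • x)) = a • g.1 (f.1 x)
    rw [f.2, g.2]⟩

/-- The canonical projection `G/H → G/K` for `H ≤ K`, as a morphism of the orbit category. -/
def projMor (A B : OrbitObj G F) (h : A.grp ≤ B.grp) : A ⟶ B :=
  ⟨Quotient.map' id (fun a b hab => by
      rw [QuotientGroup.leftRel_apply] at hab ⊢
      exact h hab),
   fun g x => by
      induction x using Quotient.inductionOn' with
      | h a => rfl⟩

lemma projMor_comp (A B C' : OrbitObj G F) (h1 : A.grp ≤ B.grp) (h2 : B.grp ≤ C'.grp) :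
    projMor A C' (h1.trans h2) = projMor A B h1 ≫ projMor B C' h2 := by
  apply Subtype.ext
  funext x
  induction x using Quotient.inductionOn' with
  | h a => rfl

variable (G F) in
/-- The category of `RΓ`-modules: contravariant functors from the orbit category to `R`-modules. -/
abbrev OrbMod := (OrbitObj G F)ᵒᵖ ⥤ ModuleCat.{0} R

variable {R}

/-- The free `RΓ`-module on the family of orbits `G/b i`; evaluated at `G/A` it is the free
`R`-module on `⨿ᵢ (G/b i)^A = ⨿ᵢ Hom(G/A, G/b i)`. -/
def freeOn {ι : Type} (b : ι → OrbitObj G F) : OrbMod G F R where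
  obj A := ModuleCat.of R ((Σ i : ι, (A.unop ⟶ b i)) →₀ R)
  map {A B} f := ModuleCat.ofHom (Finsupp.lmapDomain R R (fun x => ⟨x.1, f.unop ≫ x.2⟩))
  map_id A := by
    have h : (fun x : (Σ i : ι, (A.unop ⟶ b i)) =>
        ((⟨x.1, (𝟙 A : A ⟶ A).unop ≫ x.2⟩ : Σ i : ι, (A.unop ⟶ b i)))) = _root_.id := by
      funext x
      cases x with
      | mk i g => simp
    show ModuleCat.ofHom (Finsupp.lmapDomain R R _) = _
    rw [h, Finsupp.lmapDomain_id]
    rfl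
  map_comp {A B C} f g := by
    have h : (fun x : (Σ i : ι, (A.unop ⟶ b i)) =>
          ((⟨x.1, (f ≫ g).unop ≫ x.2⟩ : Σ i : ι, (C.unop ⟶ b i)))) =
        (fun x : (Σ i : ι, (B.unop ⟶ b i)) =>
          ((⟨x.1, g.unop ≫ x.2⟩ : Σ i : ι, (C.unop ⟶ b i)))) ∘
        (fun x : (Σ i : ι, (A.unop ⟶ b i)) =>
          ((⟨x.1, f.unop ≫ x.2⟩ : Σ i : ι, (B.unop ⟶ b i)))) := by
      funext x
      cases x with
      | mk i h => simp
    show ModuleCat.ofHom (Finsupp.lmapDomain R R _) = _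
    rw [h, Finsupp.lmapDomain_comp]
    rfl

/-- The morphism of free modules induced by a reindexing map `u : ι' → ι`. -/
def freeOnMap {ι' ι : Type} (u : ι' → ι) (b : ι → OrbitObj G F) :
    (freeOn (R := R) (fun j => b (u j))) ⟶ freeOn (R := R) b where
  app A := ModuleCat.ofHom (Finsupp.lmapDomain R R (fun x => ⟨u x.1, x.2⟩))
  naturality {A B} f := by
    show ModuleCat.ofHom ((Finsupp.lmapDomain R R _).comp (Finsupp.lmapDomain R R _)) =
      ModuleCat.ofHom ((Finsupp.lmapDomain R R _).comp (Finsupp.lmapDomain R R _))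
    rw [← Finsupp.lmapDomain_comp, ← Finsupp.lmapDomain_comp]

variable (R) in
/-- An `RΓ`-module is free if it is isomorphic to a direct sum of modules `R[(G/K)^?]`. -/
def IsFreeMod (M : OrbMod G F R) : Prop :=
  ∃ (ι : Type) (b : ι → OrbitObj G F), Nonempty (M ≅ freeOn b)

variable (R) in
/-- A finitely generated free `RΓ`-module. -/
def IsFinFreeMod (M : OrbMod G F R) : Prop :=
  ∃ (k : ℕ) (b : Fin k → OrbitObj G F), Nonempty (M ≅ freeOn b)

variable (R) in
/-- An `RΓ`-module is projective if it is a direct summand of a free module. -/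
def IsProjMod (M : OrbMod G F R) : Prop :=
  ∃ (P : OrbMod G F R) (i : M ⟶ P) (r : P ⟶ M), IsFreeMod R P ∧ i ≫ r = 𝟙 M

variable (R) in
/-- A finitely generated projective `RΓ`-module: a direct summand of a f.g. free module. -/
def IsFinProjMod (M : OrbMod G F R) : Prop :=
  ∃ (P : OrbMod G F R) (i : M ⟶ P) (r : P ⟶ M), IsFinFreeMod R P ∧ i ≫ r = 𝟙 M

variable (R) in
/-- A finitely generated `RΓ`-module: a quotient of a f.g. free module. -/
def IsFGMod (M : OrbMod G F R) : Prop :=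
  ∃ (k : ℕ) (b : Fin k → OrbitObj G F) (π : freeOn b ⟶ M),
    ∀ A : (OrbitObj G F)ᵒᵖ, Function.Surjective (π.app A)

variable (G F R) in
/-- (Nonnegatively graded) chain complexes of `RΓ`-modules. -/
abbrev OrbCx := ChainComplex (OrbMod G F R) ℕ

variable (R) in
/-- The complex is zero above some dimension. -/
def IsBoundedCx (C : OrbCx G F R) : Prop := ∃ n : ℕ, ∀ i : ℕ, n < i → IsZero (C.X i)

variable (R) in
/-- A finite free chain complex of `RΓ`-modules. -/
def IsFiniteFreeCx (C : OrbCx G F R) : Prop := IsBoundedCx R C ∧ ∀ i, IsFinFreeMod R (C.X i)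

variable (R) in
/-- A finite projective chain complex of `RΓ`-modules. -/
def IsFiniteProjCx (C : OrbCx G F R) : Prop := IsBoundedCx R C ∧ ∀ i, IsFinProjMod R (C.X i)

/-- Evaluation of a chain complex of `RΓ`-modules at an orbit `G/A`; this is the complex
`C(A)` of `R`-modules. -/
def evalCx (C : OrbCx G F R) (A : OrbitObj G F) : ChainComplex (ModuleCat.{0} R) ℕ where
  X i := (C.X i).obj (op A)
  d i j := (C.d i j).app (op A)
  shape i j h := by
    show (C.d i j).app (op A) = 0
    rw [C.shape i j h]; simp
  d_comp_d' i j k _ _ := by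
    show (C.d i j).app (op A) ≫ (C.d j k).app (op A) = 0
    rw [← NatTrans.comp_app, C.d_comp_d]; simp

/-- The chain map `C(f) : C(K) → C(H)` induced by a `G`-map `f : G/H → G/K`. -/
def evalMap (C : OrbCx G F R) {A B : OrbitObj G F} (f : A ⟶ B) :
    evalCx C B ⟶ evalCx C A where
  f i := (C.X i).map f.op
  comm' i j _ := (C.d i j).naturality f.op

/-- `Dim C` at an object of the orbit category: the largest `d` with `C_d(A) ≠ 0`
(and `-1` if `C(A) = 0`). -/
def dimObj (C : OrbCx G F R) (A : OrbitObj G F) : ℤ :=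
  sSup (insert (-1) {d : ℤ | ∃ i : ℕ, (i : ℤ) = d ∧ ¬ IsZero ((C.X i).obj (op A))})

open Classical in
/-- The dimension function `Dim C` as a super class function on all subgroups of `G`. -/
def dimFun (C : OrbCx G F R) (H : Subgroup G) : ℤ :=
  if h : H ∈ F then dimObj C ⟨H, h⟩ else -1

/-- The homological dimension of `C(A)` : the largest `d` with `H_d(C(A)) ≠ 0`. -/
def hdimObj (C : OrbCx G F R) (A : OrbitObj G F) : ℤ :=
  sSup (insert (-1) {d : ℤ | ∃ i : ℕ, (i : ℤ) = d ∧ ¬ IsZero ((evalCx C A).homology i)})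

/-- `C` is tight at `A` if `Dim C(A) = hdim C(A)`. -/
def TightAt (C : OrbCx G F R) (A : OrbitObj G F) : Prop := dimObj C A = hdimObj C A

variable (G F R) in
/-- The constant functor `R̲`. -/
def constR : OrbMod G F R := (Functor.const (OrbitObj G F)ᵒᵖ).obj (ModuleCat.of R R)

variable (R) in
/-- The augmented complex `⋯ → D_1 → D_0 → R → 0` of a complex of `R`-modules equipped
with an augmentation `e`, with `R` placed in degree `0` (so degree `i+1` is old degree `i`). -/
def augmentR (D : ChainComplex (ModuleCat.{0} R) ℕ) (e : D.X 0 ⟶ ModuleCat.of R R)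
    (he : D.d 1 0 ≫ e = 0) : ChainComplex (ModuleCat.{0} R) ℕ :=
  ChainComplex.of (fun n => match n with | 0 => ModuleCat.of R R | (k+1) => D.X k)
    (fun n => match n with | 0 => e | (k+1) => D.d (k+1) k)
    (fun n => match n with | 0 => he | (k+1) => D.d_comp_d _ _ _)

variable (R) in
/-- A complex of `R`-modules (already augmented) has the homology of an `nv`-sphere:
homology `R` in degree `nv + 1` and zero elsewhere.  (Degree `d` of reduced homology
corresponds to degree `d+1` of the augmented complex.) -/
def SphereLike (D : ChainComplex (ModuleCat.{0} R) ℕ) (nv : ℤ) : Prop :=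
  ∃ m : ℕ, (m : ℤ) = nv + 1 ∧ (∀ i : ℕ, i ≠ m → IsZero (D.homology i)) ∧
    Nonempty (D.homology m ≅ ModuleCat.of R R)

lemma eval_d_aug (C : OrbCx G F R) (ε : C.X 0 ⟶ constR G F R) (hε : C.d 1 0 ≫ ε = 0)
    (A : OrbitObj G F) :
    (evalCx C A).d 1 0 ≫ (ε.app (op A) : (C.X 0).obj (op A) ⟶ ModuleCat.of R R) = 0 := by
  show (C.d 1 0).app (op A) ≫ ε.app (op A) = 0
  rw [← NatTrans.comp_app, hε]
  simp

/-- `C` is an (augmented) `R`-homology `n`-sphere: for every `K ∈ F` the reduced homology of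
`C(K)` is that of an `n(K)`-sphere. -/
def IsHomologySphere (C : OrbCx G F R) (ε : C.X 0 ⟶ constR G F R) (hε : C.d 1 0 ≫ ε = 0)
    (n : Subgroup G → ℤ) : Prop :=
  ∀ A : OrbitObj G F,
    SphereLike R (augmentR R (evalCx C A) (ε.app (op A)) (eval_d_aug C ε hε A)) (n A.grp)

variable (G) in
/-- Condition (i): the dimension function is monotone. -/
def CondI (n : Subgroup G → ℤ) : Prop :=
  ∀ H K : Subgroup G, Subconj G H K → n K ≤ n H

/-- Condition (ii): if `n(H) = n(K)` then every `G`-map `f : G/H → G/K` induces an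
`R`-homology isomorphism `C(K) → C(H)`. -/
def CondII (C : OrbCx G F R) (n : Subgroup G → ℤ) : Prop :=
  ∀ (A B : OrbitObj G F) (f : A ⟶ B), n A.grp = n B.grp →
    ∀ i : ℕ, IsIso (HomologicalComplex.homologyMap (evalMap C f) i)

variable (G F) in
/-- Condition (iii): joins of subgroups realizing the same dimension stay in the
family with the same dimension. -/
def CondIII (n : Subgroup G → ℤ) : Prop :=
  ∀ H K L : Subgroup G, H ∈ F → K ∈ F → L ∈ F → H ≤ K → H ≤ L →
    n H = n K → n H = n L → -1 < n H → (K ⊔ L ∈ F ∧ n (K ⊔ L) = n H)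



/-- The subcomplex of a complex of `R`-modules determined by a compatible family of
submodules. -/
def subCx (D : ChainComplex (ModuleCat.{0} R) ℕ) (N : ∀ i, Submodule R (D.X i))
    (hN : ∀ i j, ∀ x ∈ N i, D.d i j x ∈ N j) : ChainComplex (ModuleCat.{0} R) ℕ where
  X i := ModuleCat.of R (N i)
  d i j := ModuleCat.ofHom ((D.d i j).hom.restrict (hN i j))
  shape i j h := by
    ext x
    show D.d i j x.1 = 0
    rw [D.shape i j h]
    rfl
  d_comp_d' i j k _ _ := by
    ext x
    show D.d j k (D.d i j x.1) = 0
    exact DFunLike.congr_fun (congrArg ModuleCat.Hom.hom (D.d_comp_d i j k)) x.1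

/-- The inclusion of subcomplexes induced by inclusions of submodules. -/
def subCxIncl (D : ChainComplex (ModuleCat.{0} R) ℕ) (N N' : ∀ i, Submodule R (D.X i))
    (hN : ∀ i j, ∀ x ∈ N i, D.d i j x ∈ N j) (hN' : ∀ i j, ∀ x ∈ N' i, D.d i j x ∈ N' j)
    (h : ∀ i, N' i ≤ N i) : subCx D N' hN' ⟶ subCx D N hN where
  f i := ModuleCat.ofHom (Submodule.inclusion (h i))
  comm' i j _ := by
    ext x
    rfl

/-- The quotient complex of a complex of `R`-modules by a compatible family of submodules. -/
def subQuotCx (D : ChainComplex (ModuleCat.{0} R) ℕ) (N : ∀ i, Submodule R (D.X i))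
    (hN : ∀ i j, ∀ x ∈ N i, D.d i j x ∈ N j) : ChainComplex (ModuleCat.{0} R) ℕ where
  X i := ModuleCat.of R ((D.X i) ⧸ N i)
  d i j := ModuleCat.ofHom (Submodule.mapQ (N i) (N j) (D.d i j).hom (fun x hx => hN i j x hx))
  shape i j h := by
    apply ModuleCat.hom_ext
    refine Submodule.linearMap_qext _ ?_
    ext x
    simp only [LinearMap.comp_apply, Submodule.mkQ_apply, Submodule.mapQ_apply,
      D.shape i j h]
    rfl
  d_comp_d' i j k _ _ := by
    apply ModuleCat.hom_ext
    refine Submodule.linearMap_qext _ ?_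
    ext x
    have hx : D.d j k (D.d i j x) = 0 :=
      DFunLike.congr_fun (congrArg ModuleCat.Hom.hom (D.d_comp_d i j k)) x
    show (Submodule.mapQ (N j) (N k) (D.d j k).hom (fun y hy => hN j k y hy))
        ((Submodule.mapQ (N i) (N j) (D.d i j).hom (fun y hy => hN i j y hy))
          (Submodule.Quotient.mk x)) = 0
    rw [Submodule.mapQ_apply, Submodule.mapQ_apply, hx]
    rfl

/-- The restriction of an augmentation to a subcomplex. -/
def subAug (D : ChainComplex (ModuleCat.{0} R) ℕ) (N : ∀ i, Submodule R (D.X i))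
    (hN : ∀ i j, ∀ x ∈ N i, D.d i j x ∈ N j) (e : D.X 0 ⟶ ModuleCat.of R R) :
    (subCx D N hN).X 0 ⟶ ModuleCat.of R R :=
  ModuleCat.ofHom ((e.hom : D.X 0 →ₗ[R] (ModuleCat.of R R)).comp (N 0).subtype)

lemma subAug_d (D : ChainComplex (ModuleCat.{0} R) ℕ) (N : ∀ i, Submodule R (D.X i))
    (hN : ∀ i j, ∀ x ∈ N i, D.d i j x ∈ N j) (e : D.X 0 ⟶ ModuleCat.of R R)
    (he : D.d 1 0 ≫ e = 0) :
    (subCx D N hN).d 1 0 ≫ subAug D N hN e = 0 := by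
  ext x
  show e (D.d 1 0 x.1) = 0
  have := DFunLike.congr_fun (congrArg ModuleCat.Hom.hom he) x.1
  simpa using this

lemma mapRange_le (C : OrbCx G F R) {A B : OrbitObj G F} (f : A ⟶ B) (i j : ℕ) :
    Submodule.map ((evalCx C A).d i j).hom (LinearMap.range ((C.X i).map f.op).hom) ≤
      LinearMap.range ((C.X j).map f.op).hom := by
  rintro x ⟨y, ⟨z, rfl⟩, rfl⟩
  refine ⟨(C.d i j).app (op B) z, ?_⟩
  exact (DFunLike.congr_fun (congrArg ModuleCat.Hom.hom ((C.d i j).naturality f.op)) z).symm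

/-- The sum of the images of the maps `C(f_k) : C(B_k) → C(A)` in degree `i`. -/
def rangeN (C : OrbCx G F R) (A : OrbitObj G F) {κ : Type} (Bs : κ → OrbitObj G F)
    (fs : ∀ k, A ⟶ Bs k) (i : ℕ) : Submodule R ((evalCx C A).X i) :=
  ⨆ k, LinearMap.range ((C.X i).map (fs k).op).hom

lemma rangeN_compat (C : OrbCx G F R) (A : OrbitObj G F) {κ : Type} (Bs : κ → OrbitObj G F)
    (fs : ∀ k, A ⟶ Bs k) :
    ∀ i j, ∀ x ∈ rangeN C A Bs fs i, (evalCx C A).d i j x ∈ rangeN C A Bs fs j := by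
  intro i j x hx
  have hmap : Submodule.map ((evalCx C A).d i j).hom (rangeN C A Bs fs i) ≤ rangeN C A Bs fs j := by
    rw [rangeN, Submodule.map_iSup]
    exact iSup_le fun k => (mapRange_le C (fs k) i j).trans
      (le_iSup (fun k' => LinearMap.range ((C.X j).map (fs k').op).hom) k)
  exact hmap ⟨x, hx, rfl⟩

lemma range_le_of_factor (C : OrbCx G F R) {A B B' : OrbitObj G F} (f : A ⟶ B) (g : B ⟶ B')
    (i : ℕ) :
    LinearMap.range ((C.X i).map (f ≫ g).op).hom ≤ LinearMap.range ((C.X i).map f.op).hom := by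
  rintro x ⟨z, rfl⟩
  refine ⟨(C.X i).map g.op z, ?_⟩
  have h : (C.X i).map (f ≫ g).op = (C.X i).map g.op ≫ (C.X i).map f.op := by
    rw [op_comp, Functor.map_comp]
  rw [h]
  simp

/-- The product of two `RΓ`-modules. -/
def prodF (M N : OrbMod G F R) : OrbMod G F R where
  obj A := ModuleCat.of R (M.obj A × N.obj A)
  map {A B} f := ModuleCat.ofHom (LinearMap.prodMap (M.map f).hom (N.map f).hom)
  map_id A := by
    show ModuleCat.ofHom (LinearMap.prodMap (M.map (𝟙 A)).hom (N.map (𝟙 A)).hom) = _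
    rw [M.map_id, N.map_id]
    exact congrArg ModuleCat.ofHom (LinearMap.prodMap_id ..)
  map_comp {A B C} f g := by
    show ModuleCat.ofHom (LinearMap.prodMap (M.map (f ≫ g)).hom (N.map (f ≫ g)).hom) = _
    rw [M.map_comp, N.map_comp]
    exact congrArg ModuleCat.ofHom (LinearMap.prodMap_comp ..).symm



/-- Evaluation of a chain map of complexes of `RΓ`-modules at an orbit. -/
def evalCxMap {C D : OrbCx G F R} (phi : C ⟶ D) (A : OrbitObj G F) :
    evalCx C A ⟶ evalCx D A where
  f i := (phi.f i).app (op A)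
  comm' i j _ := by
    show (phi.f i).app (op A) ≫ (D.d i j).app (op A) =
      (C.d i j).app (op A) ≫ (phi.f j).app (op A)
    rw [← NatTrans.comp_app, ← NatTrans.comp_app, phi.comm i j]

/-- The cokernel complex of a chain map of complexes of `R`-modules. -/
def cokerCx {D E : ChainComplex (ModuleCat.{0} R) ℕ} (phi : E ⟶ D) :
    ChainComplex (ModuleCat.{0} R) ℕ :=
  subQuotCx D (fun i => LinearMap.range (phi.f i).hom) (fun i j x hx => by
    obtain ⟨y, rfl⟩ := hx
    exact ⟨E.d i j y, (DFunLike.congr_fun (congrArg ModuleCat.Hom.hom (phi.comm i j)) y).symm⟩)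

variable (G) in
/-- Indices of summands of type `(K)` with `(H) ≤ (K)`, for `H = A₀.grp`. -/
abbrev SubIdx (A₀ : OrbitObj G F) {κ : Type} (bb : κ → OrbitObj G F) : Type :=
  {j : κ // Subconj G A₀.grp (bb j).grp}

variable (G) in
/-- Indices of summands of type `(K)` with `(H) < (K)`, for `H = A₀.grp`. -/
abbrev SubIdxLT (A₀ : OrbitObj G F) {κ : Type} (bb : κ → OrbitObj G F) : Type :=
  {j : κ // SubconjLT G A₀.grp (bb j).grp}

/-!
A projective `RΓ`-module is a retract of a free module `R[Hom(-, G/B)]` (summed over a family of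
orbits `G/B`), and in the free module restriction along `G/H → G/K` has as image the span of the
basis maps `G/H → G/B` factoring through `G/K`, i.e. of those sending the base coset to a
`K`-fixed point. A point fixed by `K` and by `L` is fixed by `⟨K, L⟩`, so the intersection of the
two images is the image for `⟨K, L⟩`; and if it is nonzero, some point of some `G/B` is fixed by
`⟨K, L⟩`, which therefore lies in a conjugate of `B ∈ F`.
-/

lemma stabilizer_mem_of_isClosedFamily (hF : IsClosedFamily G F) (B : OrbitObj G F)
    (y : G ⧸ B.grp) : MulAction.stabilizer G y ∈ F := by
  obtain ⟨g, rfl⟩ := QuotientGroup.mk_surjective y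
  have hg : (g : G ⧸ B.grp) = g • ((1 : G) : G ⧸ B.grp) := by
    rw [MulAction.Quotient.smul_mk, smul_eq_mul, mul_one]
  rw [hg, MulAction.stabilizer_smul_eq_stabilizer_map_conj, MulAction.stabilizer_quotient]
  exact hF.1 g B.grp B.mem

def homOfLeStabilizer {K B : OrbitObj G F} (y : G ⧸ B.grp)
    (hy : K.grp ≤ MulAction.stabilizer G y) : K ⟶ B :=
  ⟨fun q => Quotient.liftOn' q (· • y) fun a c hac => by
      have hfix : (a⁻¹ * c) • y = y := hy (QuotientGroup.leftRel_apply.mp hac)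
      show a • y = c • y
      nth_rw 1 [← hfix]
      rw [smul_smul, mul_inv_cancel_left],
    fun g q => Quotient.inductionOn' q fun a => mul_smul g a y⟩

lemma exists_projMor_comp_eq_iff {A K B : OrbitObj G F} (hK : A.grp ≤ K.grp) (f : A ⟶ B) :
    (∃ g : K ⟶ B, projMor A K hK ≫ g = f) ↔
      K.grp ≤ MulAction.stabilizer G (f.1 (QuotientGroup.mk 1)) := by
  constructor
  · rintro ⟨g, rfl⟩ k hk
    have hk' : k • ((1 : G) : G ⧸ K.grp) = (1 : G) := by
      rwa [← MulAction.mem_stabilizer_iff, MulAction.stabilizer_quotient]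
    show k • g.1 ((1 : G) : G ⧸ K.grp) = g.1 ((1 : G) : G ⧸ K.grp)
    rw [← g.2, hk']
  · intro hy
    refine ⟨homOfLeStabilizer _ hy, Subtype.ext (funext fun q => ?_)⟩
    induction q using Quotient.inductionOn' with
    | h a =>
      show a • f.1 ((1 : G) : G ⧸ A.grp) = f.1 (a : G ⧸ A.grp)
      rw [← f.2, MulAction.Quotient.smul_mk, smul_eq_mul, mul_one]

def fixedBasis {ι : Type} (b : ι → OrbitObj G F) (A : OrbitObj G F) (J : Subgroup G) :
    Set (Σ j : ι, (A ⟶ b j)) :=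
  {x | J ≤ MulAction.stabilizer G (x.2.1 (QuotientGroup.mk 1))}

lemma fixedBasis_inter {ι : Type} (b : ι → OrbitObj G F) (A : OrbitObj G F)
    (J J' : Subgroup G) :
    fixedBasis b A J ∩ fixedBasis b A J' = fixedBasis b A (J ⊔ J') :=
  Set.ext fun _ => show J ≤ _ ∧ J' ≤ _ ↔ J ⊔ J' ≤ _ from sup_le_iff.symm

lemma range_freeOn_map_projMor {ι : Type} (b : ι → OrbitObj G F) {A K : OrbitObj G F}
    (hK : A.grp ≤ K.grp) :
    LinearMap.range ((freeOn (R := R) b).map (projMor A K hK).op).hom =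
      Finsupp.supported R R (fixedBasis b A K.grp) := by
  change LinearMap.range (Finsupp.lmapDomain R R fun x : Σ j, (K ⟶ b j) =>
    (⟨x.1, projMor A K hK ≫ x.2⟩ : Σ j, (A ⟶ b j))) = _
  rw [LinearMap.range_eq_map, ← Finsupp.supported_univ, Finsupp.lmapDomain_supported,
    Set.image_univ]
  congr 1
  ext ⟨j, f⟩
  change _ ↔ K.grp ≤ MulAction.stabilizer G (f.1 (QuotientGroup.mk 1))
  rw [← exists_projMor_comp_eq_iff hK]
  constructor
  · rintro ⟨⟨j', g⟩, ⟨⟩⟩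
    exact ⟨g, rfl⟩
  · rintro ⟨g, hg⟩
    exact ⟨⟨j, g⟩, congrArg (Sigma.mk j) hg⟩

lemma retract_app_apply {M N : OrbMod G F R} {i : M ⟶ N} {r : N ⟶ M} (hir : i ≫ r = 𝟙 M)
    (A : (OrbitObj G F)ᵒᵖ) (x : M.obj A) : r.app A (i.app A x) = x :=
  congr(($hir).app A x)

lemma range_map_eq_comap_of_retract {M N : OrbMod G F R} (i : M ⟶ N) (r : N ⟶ M)
    (hir : i ≫ r = 𝟙 M) {A B : OrbitObj G F} (f : A ⟶ B) :
    LinearMap.range (M.map f.op).hom =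
      Submodule.comap (i.app (op A)).hom (LinearMap.range (N.map f.op).hom) := by
  ext x
  simp only [LinearMap.mem_range, Submodule.mem_comap]
  constructor
  · rintro ⟨y, rfl⟩
    exact ⟨i.app (op B) y, congr(ModuleCat.Hom.hom $(i.naturality f.op) y).symm⟩
  · rintro ⟨z, hz⟩
    refine ⟨r.app (op B) z, ?_⟩
    rw [← retract_app_apply hir _ x, ← hz]
    exact congr(ModuleCat.Hom.hom $(r.naturality f.op) z).symm

lemma IsProjMod.exists_retract_freeOn {M : OrbMod G F R} (hM : IsProjMod R M) :
    ∃ (ι : Type) (b : ι → OrbitObj G F) (i : M ⟶ freeOn b) (r : freeOn b ⟶ M),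
      i ≫ r = 𝟙 M := by
  obtain ⟨P, i, r, ⟨ι, b, ⟨e⟩⟩, hir⟩ := hM
  exact ⟨ι, b, i ≫ e.hom, e.inv ≫ r, by simp [hir]⟩

section Retract

variable {M : OrbMod G F R} {ι : Type} {b : ι → OrbitObj G F} (i : M ⟶ freeOn b)
  (r : freeOn b ⟶ M) (hir : i ≫ r = 𝟙 M) {A K L : OrbitObj G F}
include hir

lemma range_map_projMor_eq_comap (hK : A.grp ≤ K.grp) :
    LinearMap.range (M.map (projMor A K hK).op).hom =
      Submodule.comap (i.app (op A)).hom (Finsupp.supported R R (fixedBasis b A K.grp)) := by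
  rw [range_map_eq_comap_of_retract i r hir, range_freeOn_map_projMor]

lemma range_inf_range_eq_comap (hK : A.grp ≤ K.grp) (hL : A.grp ≤ L.grp) :
    LinearMap.range (M.map (projMor A K hK).op).hom ⊓
        LinearMap.range (M.map (projMor A L hL).op).hom =
      Submodule.comap (i.app (op A)).hom
        (Finsupp.supported R R (fixedBasis b A (K.grp ⊔ L.grp))) := by
  rw [range_map_projMor_eq_comap i r hir, range_map_projMor_eq_comap i r hir,
    ← fixedBasis_inter, Finsupp.supported_inter]
  exact (Submodule.comap_inf _ _ _).symm

end Retract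

section Projective

variable {M : OrbMod G F R} (hM : IsProjMod R M) {A K L : OrbitObj G F} (hK : A.grp ≤ K.grp)
  (hL : A.grp ≤ L.grp)
include hM

lemma IsProjMod.range_inf_range_eq (hJ : K.grp ⊔ L.grp ∈ F) :
    LinearMap.range (M.map (projMor A K hK).op).hom ⊓
        LinearMap.range (M.map (projMor A L hL).op).hom =
      LinearMap.range
        (M.map (projMor A ⟨K.grp ⊔ L.grp, hJ⟩ (hK.trans le_sup_left)).op).hom := by
  obtain ⟨ι, b, i, r, hir⟩ := hM.exists_retract_freeOn
  rw [range_inf_range_eq_comap i r hir, range_map_projMor_eq_comap i r hir]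

lemma IsProjMod.sup_mem_of_range_inf_range_ne_bot (hF : IsClosedFamily G F)
    (hne : LinearMap.range (M.map (projMor A K hK).op).hom ⊓
        LinearMap.range (M.map (projMor A L hL).op).hom ≠ ⊥) :
    K.grp ⊔ L.grp ∈ F := by
  obtain ⟨ι, b, i, r, hir⟩ := hM.exists_retract_freeOn
  rw [range_inf_range_eq_comap i r hir] at hne
  obtain ⟨x, hx, hx0⟩ := (Submodule.ne_bot_iff _).mp hne
  have hix : i.app (op A) x ≠ 0 := fun h0 =>
    hx0 (by rw [← retract_app_apply hir _ x, h0, map_zero])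
  obtain ⟨a, ha⟩ := Finsupp.support_nonempty_iff.mpr hix
  exact hF.2 _ _ (hx ha) (stabilizer_mem_of_isClosedFamily hF (b a.1) _)

end Projective

theorem stmt2_general
    (hF : IsClosedFamily G F) (C : OrbCx G F R) (hproj : ∀ i, IsProjMod R (C.X i))
    (A K L : OrbitObj G F) (hK : A.grp ≤ K.grp) (hL : A.grp ≤ L.grp)
    (hne : ∃ i : ℕ, LinearMap.range ((C.X i).map (projMor A K hK).op).hom ⊓
        LinearMap.range ((C.X i).map (projMor A L hL).op).hom ≠ ⊥) :
    ∃ hM : K.grp ⊔ L.grp ∈ F,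
      ∀ i : ℕ,
        LinearMap.range ((C.X i).map (projMor A K hK).op).hom ⊓
          LinearMap.range ((C.X i).map (projMor A L hL).op).hom =
        LinearMap.range ((C.X i).map
          (projMor A ⟨K.grp ⊔ L.grp, hM⟩ (le_trans hK le_sup_left)).op).hom := by
  obtain ⟨i, hi⟩ := hne
  have hM := (hproj i).sup_mem_of_range_inf_range_ne_bot hK hL hF hi
  exact ⟨hM, fun i => (hproj i).range_inf_range_eq hK hL hM⟩

/-- intersections of images of restriction maps. -/
theorem stmt2 [IsDomain R] [IsPrincipalIdealRing R]
    (hF : IsClosedFamily G F) (C : OrbCx G F R) (hproj : ∀ i, IsProjMod R (C.X i))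
    (A K L : OrbitObj G F) (hK : A.grp ≤ K.grp) (hL : A.grp ≤ L.grp)
    (hne : ∃ i : ℕ, LinearMap.range ((C.X i).map (projMor A K hK).op).hom ⊓
        LinearMap.range ((C.X i).map (projMor A L hL).op).hom ≠ ⊥) :
    ∃ hM : K.grp ⊔ L.grp ∈ F,
      ∀ i : ℕ,
        LinearMap.range ((C.X i).map (projMor A K hK).op).hom ⊓
          LinearMap.range ((C.X i).map (projMor A L hL).op).hom =
        LinearMap.range ((C.X i).map
          (projMor A ⟨K.grp ⊔ L.grp, hM⟩ (le_trans hK le_sup_left)).op).hom :=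
  stmt2_general hF C hproj A K L hK hL hne

end OrbitPaper
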